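/- Let M be a loopless matroid, B = {e_1,…,e_r} a basis, and x : E → ℝ≥0 a nonnegative weighting. Define weightings x_0 = x and x_i obtained from x by setting the weights of e_1,…,e_i to zero. Then mwb(M,x) = Σ_{i=1}^{r} b_{e_i}(x_{i-1}), where b_e(z) = min{z(e), μ_e(z)} is the bottleneck weight. -/

import Mathlib

/-!
Zeroing the weight of one element `e` lowers the minimum basis weight by exactly the bottleneck
weight `b_e(z)`. A basis through `e` loses `z(e)` when `e` is zeroed, and it can also trade `e`
for an element of weight at most `μ_e(z)` from a circuit realising `μ_e(z)`. A basis avoiding `e`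
can trade the heaviest element of the fundamental circuit of `e`, which weighs at least `μ_e(z)`,
for the now weightless `e`. Summing over `e_1, …, e_r` telescopes, and once the whole basis is
zeroed the minimum basis weight is `0`.
-/

open Matroid Set

variable {α : Type*}

/-- A circuit of a matroid: a minimal dependent set. -/
def Matroid.IsCircuit' (M : Matroid α) (C : Set α) : Prop :=
  M.Dep C ∧ ∀ ⦃D⦄, D ⊂ C → M.Indep D

/-- Looplessness in the sense of the paper: no element is a loop
(every singleton of the ground set is independent) and no element is a
coloop (no element lies in all bases). -/
def Matroid.PaperLoopless (M : Matroid α) : Prop :=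
  ∀ e ∈ M.E, M.Indep {e} ∧ ∃ B, M.IsBase B ∧ e ∉ B

/-- The weight `x(B)` of a set of ground elements. -/
noncomputable def setWeight (x : α → ℝ) (B : Set α) : ℝ := ∑ᶠ e ∈ B, x e

/-- The min-max weight `μ_e(x)`: the minimum over circuits `C` containing `e`
of the maximum weight of an element of `C - e`. -/
noncomputable def muWeight (M : Matroid α) (x : α → ℝ) (e : α) : ℝ :=
  sInf {w | ∃ C, M.IsCircuit' C ∧ e ∈ C ∧ w = sSup (x '' (C \ {e}))}

/-- The bottleneck weight `b_e(x) = min {x(e), μ_e(x)}`. -/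
noncomputable def bottleneck (M : Matroid α) (x : α → ℝ) (e : α) : ℝ :=
  min (x e) (muWeight M x e)

/-- The minimum weight of a basis of `M`. -/
noncomputable def mwb (M : Matroid α) (x : α → ℝ) : ℝ :=
  sInf {w | ∃ B, M.IsBase B ∧ w = setWeight x B}

/-- `B` is an `x`-optimal basis of `M`. -/
def IsOptimalBase (M : Matroid α) (x : α → ℝ) (B : Set α) : Prop :=
  M.IsBase B ∧ ∀ B', M.IsBase B' → setWeight x B ≤ setWeight x B'

/-- Deletion of a single element. -/
noncomputable def Matroid.del (M : Matroid α) (e : α) : Matroid α :=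
  M ↾ (M.E \ {e})

/-- Contraction of a single element, defined by duality: `M/e = (M✶ \ e)✶`. -/
noncomputable def Matroid.con (M : Matroid α) (e : α) : Matroid α :=
  ((M✶ ↾ (M.E \ {e}))✶)

open Function

section SetWeight

variable {z : α → ℝ} {B : Set α} {e : α}

lemma setWeight_nonneg (hz : ∀ f, 0 ≤ z f) (B : Set α) : 0 ≤ setWeight z B :=
  finsum_nonneg fun a => finsum_nonneg fun _ => hz a

lemma setWeight_insert (heB : e ∉ B) (hB : B.Finite) :
    setWeight z (insert e B) = z e + setWeight z B :=
  finsum_mem_insert z heB hB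

lemma setWeight_eq_add_sdiff (heB : e ∈ B) (hB : B.Finite) :
    setWeight z B = z e + setWeight z (B \ {e}) := by
  rw [← setWeight_insert (B := B \ {e}) (by simp) hB.sdiff, insert_sdiff_singleton,
    insert_eq_of_mem heB]

lemma setWeight_update_zero [DecidableEq α] (hB : B.Finite) :
    setWeight (update z e 0) B = setWeight z (B \ {e}) := by
  have hagree : setWeight (update z e 0) (B \ {e}) = setWeight z (B \ {e}) :=
    finsum_mem_congr rfl fun a ha => update_of_ne ha.2 0 z
  by_cases heB : e ∈ B
  · rw [setWeight_eq_add_sdiff heB hB, update_self, zero_add, hagree]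
  · rw [← hagree, sdiff_singleton_eq_self heB]

end SetWeight

namespace Matroid

variable {M : Matroid α} {z : α → ℝ} {B C : Set α} {e f : α}

lemma isCircuit'_iff : M.IsCircuit' C ↔ M.IsCircuit C :=
  isCircuit_iff_forall_ssubset.symm

lemma IsBase.exists_isBase_insert_sdiff_of_isCircuit (hB : M.IsBase B) (heB : e ∈ B)
    (hC : M.IsCircuit C) (heC : e ∈ C) :
    ∃ f ∈ C \ {e}, f ∉ B \ {e} ∧ M.IsBase (insert f (B \ {e})) := by
  obtain ⟨f, hf, hfcl⟩ : ∃ f ∈ C \ {e}, f ∉ M.closure (B \ {e}) := by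
    by_contra! hsub
    exact hB.indep.notMem_closure_sdiff_of_mem heB
      (M.closure_subset_closure_of_subset_closure hsub (hC.mem_closure_sdiff_singleton_of_mem heC))
  exact ⟨f, hf, fun h => hfcl (M.subset_closure _ (sdiff_subset.trans hB.subset_ground) h),
    hB.exchange_base_of_notMem_closure heB hfcl (hC.subset_ground hf.1)⟩

lemma IsBase.isBase_insert_sdiff_of_mem_fundCircuit (hB : M.IsBase B) (heE : e ∈ M.E)
    (heB : e ∉ B) (hf : f ∈ M.fundCircuit e B) : M.IsBase (insert e B \ {f}) := by
  obtain rfl | hfe := eq_or_ne f e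
  · rwa [insert_sdiff_self_of_notMem heB]
  have hfB : f ∈ B := (M.fundCircuit_subset_insert e B hf).resolve_left hfe
  exact hB.exchange_isBase_of_indep' hfB heB
    ((hB.indep.mem_fundCircuit_iff (by rwa [hB.closure_eq]) heB).1 hf)

lemma PaperLoopless.exists_isCircuit_mem (hM : M.PaperLoopless) (he : e ∈ M.E) :
    ∃ C, M.IsCircuit C ∧ e ∈ C := by
  obtain ⟨-, B, hB, heB⟩ := hM e he
  exact ⟨_, hB.fundCircuit_isCircuit he heB, M.mem_fundCircuit e B⟩

lemma PaperLoopless.sdiff_singleton_nonempty (hM : M.PaperLoopless) (hC : M.IsCircuit C)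
    (heC : e ∈ C) : (C \ {e}).Nonempty := by
  rw [nonempty_iff_ne_empty, Ne, sdiff_eq_empty]
  exact fun hCe => hC.not_indep ((hM e (hC.subset_ground heC)).1.subset hCe)

end Matroid

section BottleneckWeight

variable {M : Matroid α} {z : α → ℝ} {B C : Set α} {e : α}

lemma muWeight_nonneg (hz : ∀ f, 0 ≤ z f) : 0 ≤ muWeight M z e :=
  Real.sInf_nonneg <| by
    rintro _ ⟨C, -, -, rfl⟩
    exact Real.sSup_nonneg <| by
      rintro _ ⟨a, -, rfl⟩
      exact hz a

lemma bottleneck_nonneg (hz : ∀ f, 0 ≤ z f) : 0 ≤ bottleneck M z e :=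
  le_min (hz e) (muWeight_nonneg hz)

lemma muWeight_set_finite (M : Matroid α) [M.Finite] (z : α → ℝ) (e : α) :
    {w | ∃ C, M.IsCircuit' C ∧ e ∈ C ∧ w = sSup (z '' (C \ {e}))}.Finite := by
  refine (M.ground_finite.finite_subsets.image fun C => sSup (z '' (C \ {e}))).subset ?_
  rintro _ ⟨C, hC, -, rfl⟩
  exact ⟨C, hC.1.subset_ground, rfl⟩

lemma le_mwb {c : ℝ} (h : ∀ B, M.IsBase B → c ≤ setWeight z B) : c ≤ mwb M z := by
  obtain ⟨B, hB⟩ := M.exists_isBase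
  refine le_csInf ⟨_, B, hB, rfl⟩ ?_
  rintro _ ⟨B', hB', rfl⟩
  exact h B' hB'

variable [M.Finite]

lemma muWeight_le (hC : M.IsCircuit C) (heC : e ∈ C) :
    muWeight M z e ≤ sSup (z '' (C \ {e})) :=
  csInf_le (muWeight_set_finite M z e).bddBelow ⟨C, isCircuit'_iff.2 hC, heC, rfl⟩

lemma exists_isCircuit_muWeight_eq (hC : M.IsCircuit C) (heC : e ∈ C) :
    ∃ C', M.IsCircuit C' ∧ e ∈ C' ∧ muWeight M z e = sSup (z '' (C' \ {e})) := by
  have hne : {w | ∃ C, M.IsCircuit' C ∧ e ∈ C ∧ w = sSup (z '' (C \ {e}))}.Nonempty :=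
    ⟨_, C, isCircuit'_iff.2 hC, heC, rfl⟩
  obtain ⟨C', hC', heC', hμ⟩ := hne.csInf_mem (muWeight_set_finite M z e)
  exact ⟨C', isCircuit'_iff.1 hC', heC', hμ⟩

lemma mwb_le (hB : M.IsBase B) : mwb M z ≤ setWeight z B := by
  refine csInf_le (Set.Finite.bddBelow ?_) ⟨B, hB, rfl⟩
  refine (M.ground_finite.finite_subsets.image (setWeight z)).subset ?_
  rintro _ ⟨B', hB', rfl⟩
  exact ⟨B', hB'.subset_ground, rfl⟩

lemma mwb_eq_zero (hz : ∀ f, 0 ≤ z f) (hB : M.IsBase B) (hzB : ∀ a ∈ B, z a = 0) :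
    mwb M z = 0 :=
  le_antisymm ((mwb_le hB).trans_eq (finsum_mem_eq_zero_of_forall_eq_zero hzB))
    (le_mwb fun B _ => setWeight_nonneg hz B)

variable [DecidableEq α]

lemma mwb_le_bottleneck_add_mwb_update (hM : M.PaperLoopless) (hz : ∀ f, 0 ≤ z f)
    (he : e ∈ M.E) : mwb M z ≤ bottleneck M z e + mwb M (update z e 0) := by
  obtain ⟨C₀, hC₀, heC₀⟩ := hM.exists_isCircuit_mem he
  obtain ⟨C, hC, heC, hμ⟩ := exists_isCircuit_muWeight_eq (z := z) hC₀ heC₀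
  rw [← sub_le_iff_le_add']
  refine le_mwb fun B hB => ?_
  have hBfin := hB.finite
  rw [sub_le_iff_le_add', setWeight_update_zero hBfin]
  by_cases heB : e ∈ B
  · obtain ⟨f, hf, hfB, hB'⟩ := hB.exists_isBase_insert_sdiff_of_isCircuit heB hC heC
    have hzf : z f ≤ muWeight M z e :=
      hμ ▸ le_csSup (hC.finite.sdiff.image z).bddAbove (mem_image_of_mem z hf)
    have hkeep := mwb_le (z := z) hB
    have hswap := mwb_le (z := z) hB'
    rw [setWeight_eq_add_sdiff heB hBfin] at hkeep
    rw [setWeight_insert hfB hBfin.sdiff] at hswap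
    rw [bottleneck, ← min_add_add_right]
    exact le_min (by linarith) (by linarith)
  · rw [sdiff_singleton_eq_self heB]
    linarith [mwb_le (z := z) hB, bottleneck_nonneg hz (M := M) (e := e)]

lemma bottleneck_add_mwb_update_le (hM : M.PaperLoopless) (he : e ∈ M.E) :
    bottleneck M z e + mwb M (update z e 0) ≤ mwb M z := by
  refine le_mwb fun B hB => ?_
  have hBfin := hB.finite
  by_cases heB : e ∈ B
  · have h := mwb_le (z := update z e 0) hB
    rw [setWeight_update_zero hBfin] at h
    rw [setWeight_eq_add_sdiff heB hBfin]
    have hb : bottleneck M z e ≤ z e := min_le_left _ _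
    linarith
  · have hC := hB.fundCircuit_isCircuit he heB
    have heC := M.mem_fundCircuit e B
    have hne := hM.sdiff_singleton_nonempty hC heC
    obtain ⟨f, hf, hmax⟩ := exists_max_image _ z hC.finite.sdiff hne
    have hμ : muWeight M z e ≤ z f :=
      (muWeight_le hC heC).trans (csSup_le (hne.image z) (forall_mem_image.2 hmax))
    have hfB : f ∈ B := (M.fundCircuit_subset_insert e B hf.1).resolve_left hf.2
    have h := mwb_le (z := update z e 0) (hB.isBase_insert_sdiff_of_mem_fundCircuit he heB hf.1)
    rw [setWeight_update_zero (hBfin.insert e).sdiff, Set.sdiff_sdiff_comm,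
      insert_sdiff_self_of_notMem heB] at h
    rw [setWeight_eq_add_sdiff hfB hBfin]
    have hb : bottleneck M z e ≤ muWeight M z e := min_le_right _ _
    linarith

theorem mwb_eq_bottleneck_add_mwb_update (hM : M.PaperLoopless) (hz : ∀ f, 0 ≤ z f)
    (he : e ∈ M.E) : mwb M z = bottleneck M z e + mwb M (update z e 0) :=
  (mwb_le_bottleneck_add_mwb_update hM hz he).antisymm (bottleneck_add_mwb_update_le hM he)

end BottleneckWeight

open scoped Classical in
def IsPrefixZeroing {r : ℕ} (x : α → ℝ) (e : Fin r → α) (xs : ℕ → α → ℝ) : Prop :=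
  ∀ i a, xs i a = if ∃ j : Fin r, (j : ℕ) < i ∧ e j = a then 0 else x a

namespace IsPrefixZeroing

variable {r : ℕ} {x : α → ℝ} {e : Fin r → α} {xs : ℕ → α → ℝ}

lemma zero (h : IsPrefixZeroing x e xs) : xs 0 = x := by
  funext a
  simp [h 0 a]

lemma nonneg (h : IsPrefixZeroing x e xs) (hx : ∀ f, 0 ≤ x f) (i : ℕ) (a : α) :
    0 ≤ xs i a := by
  rw [h i a]
  split_ifs
  exacts [le_rfl, hx a]

lemma eq_zero_of_mem_range (h : IsPrefixZeroing x e xs) {a : α} (ha : a ∈ range e) :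
    xs r a = 0 := by
  obtain ⟨j, rfl⟩ := ha
  rw [h, if_pos ⟨j, j.2, rfl⟩]

lemma succ [DecidableEq α] (h : IsPrefixZeroing x e xs) (i : Fin r) :
    xs (i + 1) = update (xs i) (e i) 0 := by
  funext a
  obtain rfl | hne := eq_or_ne a (e i)
  · rw [update_self, h, if_pos ⟨i, Nat.lt_succ_self i, rfl⟩]
  · have hprefix : (∃ j : Fin r, (j : ℕ) < i + 1 ∧ e j = a) ↔
        ∃ j : Fin r, (j : ℕ) < i ∧ e j = a := by
      refine exists_congr fun j => and_congr_left fun hja => ?_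
      have hji : (j : ℕ) ≠ i := fun hji => hne (hja.symm.trans (congrArg e (Fin.ext hji)))
      omega
    rw [update_of_ne hne, h, h]
    simp only [hprefix]
    congr

end IsPrefixZeroing

open scoped Classical in
theorem stmt14_general (M : Matroid α) [M.Finite] (hM : M.PaperLoopless)
    (x : α → ℝ) (hx : ∀ f, 0 ≤ x f)
    {r : ℕ} (e : Fin r → α)
    (hB : M.IsBase (Set.range e))
    (xs : ℕ → α → ℝ)
    (hxs : ∀ i a, xs i a = if ∃ j : Fin r, (j : ℕ) < i ∧ e j = a then 0 else x a) :
    mwb M x = ∑ i : Fin r, bottleneck M (xs i) (e i) := by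
  have hzero : IsPrefixZeroing x e xs := hxs
  have hstep (i : Fin r) :
      bottleneck M (xs i) (e i) = mwb M (xs i) - mwb M (xs (i + 1)) := by
    rw [hzero.succ i, mwb_eq_bottleneck_add_mwb_update hM (hzero.nonneg hx i)
      (hB.subset_ground (mem_range_self i)), add_sub_cancel_right]
  rw [Finset.sum_congr rfl fun i _ => hstep i,
    Fin.sum_univ_eq_sum_range (fun i => mwb M (xs i) - mwb M (xs (i + 1))),
    Finset.sum_range_sub', hzero.zero,
    mwb_eq_zero (hzero.nonneg hx r) hB fun _ => hzero.eq_zero_of_mem_range, sub_zero]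

open scoped Classical in
/-- computing the optimal value by successively zeroing the
weights of the elements of a fixed basis and summing bottleneck weights.
Here `xs i` is the weighting obtained from `x` by zeroing `e 0, …, e (i-1)`,
so `xs 0 = x` and the summand for `i` is `b_{e i}(xs i)`. -/
theorem stmt14 (M : Matroid α) [M.Finite] (hM : M.PaperLoopless)
    (x : α → ℝ) (hx : ∀ f, 0 ≤ x f)
    {r : ℕ} (e : Fin r → α) (hinj : Function.Injective e)
    (hB : M.IsBase (Set.range e))
    (xs : ℕ → α → ℝ)
    (hxs : ∀ i a, xs i a = if ∃ j : Fin r, (j : ℕ) < i ∧ e j = a then 0 else x a) :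
    mwb M x = ∑ i : Fin r, bottleneck M (xs i) (e i) :=
  stmt14_general M hM x hx e hB xs hxs
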